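/- arXiv:2105.12845 — 5 statements merged into one kernel-verified Lean document; each statement's English description precedes it below -/
import Mathlib

section
/- For k ≥ 0 and a subset S ⊆ F_q, the number of monic polynomials g of degree k over F_q such that the set of roots of g in F_q is exactly S equals Σ_{j=0}^{k−|S|} C(q−|S|, j) (−1)^j q^{k−|S|−j} when |S| ≤ k, and 0 when |S| > k. -/
/-!
A polynomial has root set exactly `S` iff it vanishes on `S` and nowhere on `Sᶜ`, so by
inclusion–exclusion over the subsets `t ⊆ Sᶜ` the count is `∑ₜ (-1)^|t| N(S ∪ t)`, where `N(A)`
counts the monic polynomials of degree `k` vanishing on `A`. Those are exactly the products of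
`∏_{a ∈ A} (X - a)` with a monic polynomial of degree `k - |A|`, so `N(A) = q^(k - |A|)` when
`|A| ≤ k`, while `N(A) = 0` when `|A| > k` since a nonzero polynomial has at most its degree
many roots. Grouping the subsets `t` by cardinality gives the binomial sum.
-/

open Polynomial Finset

namespace Polynomial

variable {R : Type*} [CommRing R]

noncomputable def isMonicOfDegreeEquivDegreeLT [Nontrivial R] (n : ℕ) :
    {p : R[X] // IsMonicOfDegree p n} ≃ degreeLT R n where
  toFun p := ⟨p.1 - X ^ n, by
    rw [mem_degreeLT, degree_lt_iff_coeff_zero]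
    intro i hi
    rw [coeff_sub, p.2.coeff_eq (isMonicOfDegree_X_pow R n) hi, sub_self]⟩
  invFun q := ⟨X ^ n + q.1, by
    have hq : q.1.degree < n := mem_degreeLT.1 q.2
    refine ⟨?_, monic_X_pow_add hq⟩
    rw [natDegree_add_eq_left_of_degree_lt (by rwa [degree_X_pow]), natDegree_X_pow]⟩
  left_inv p := by simp
  right_inv q := by simp

instance [Finite R] (n : ℕ) : Finite {p : R[X] // IsMonicOfDegree p n} := by
  nontriviality R
  exact .of_equiv _ ((isMonicOfDegreeEquivDegreeLT n).trans (degreeLTEquiv R n).toEquiv).symm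

instance [Finite R] (n : ℕ) (P : R[X] → Prop) : Finite {p : R[X] // IsMonicOfDegree p n ∧ P p} :=
  .of_injective (fun p => (⟨p.1, p.2.1⟩ : {p : R[X] // IsMonicOfDegree p n}))
    fun p p' h => Subtype.ext (by simpa using congrArg Subtype.val h)

theorem natCard_isMonicOfDegree [Finite R] [Nontrivial R] (n : ℕ) :
    Nat.card {p : R[X] // IsMonicOfDegree p n} = Nat.card R ^ n := by
  rw [Nat.card_congr ((isMonicOfDegreeEquivDegreeLT n).trans (degreeLTEquiv R n).toEquiv),
    Nat.card_fun, Nat.card_fin]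

theorem natCard_isMonicOfDegree_add_dvd {q : R[X]} {d : ℕ} (hq : IsMonicOfDegree q d) (m : ℕ) :
    Nat.card {p : R[X] // IsMonicOfDegree p (m + d) ∧ q ∣ p} =
      Nat.card {p : R[X] // IsMonicOfDegree p m} := by
  refine (Nat.card_eq_of_bijective (fun r => ⟨r.1 * q, r.2.mul hq, dvd_mul_left q r.1⟩)
    ⟨fun r s hrs => ?_, ?_⟩).symm
  · exact Subtype.ext (hq.monic.isRegular.right (congrArg Subtype.val hrs))
  · rintro ⟨p, hp, r, rfl⟩
    rw [mul_comm] at hp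
    exact ⟨⟨r, hq.of_mul_right hp⟩, Subtype.ext (mul_comm r q)⟩

theorem prod_X_sub_C_dvd_iff_forall_eval_eq_zero [IsDomain R] {p : R[X]} (hp : p ≠ 0)
    (A : Finset R) : ∏ a ∈ A, (X - C a) ∣ p ↔ ∀ a ∈ A, p.eval a = 0 := by
  rw [Finset.prod_eq_multiset_prod, Multiset.prod_X_sub_C_dvd_iff_le_roots hp,
    Multiset.le_iff_subset A.nodup]
  simp [Multiset.subset_iff, mem_roots hp]

theorem natCard_isMonicOfDegree_forall_eval_eq_zero [IsDomain R] [Finite R] (A : Finset R)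
    (n : ℕ) :
    Nat.card {p : R[X] // IsMonicOfDegree p n ∧ ∀ a ∈ A, p.eval a = 0} =
      if #A ≤ n then Nat.card R ^ (n - #A) else 0 := by
  classical
  split_ifs with hA
  · have hprod : IsMonicOfDegree (∏ a ∈ A, (X - C a)) #A :=
      ⟨natDegree_finsetProd_X_sub_C_eq_card A id, monic_prod_X_sub_C id A⟩
    rw [← natCard_isMonicOfDegree, ← natCard_isMonicOfDegree_add_dvd hprod, Nat.sub_add_cancel hA]
    exact Nat.card_congr (Equiv.subtypeEquivRight fun p =>
      and_congr_right fun hp => (prod_X_sub_C_dvd_iff_forall_eval_eq_zero hp.ne_zero A).symm)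
  · refine Nat.card_eq_zero.2 (.inl ⟨fun ⟨p, hp, hroot⟩ => hA ?_⟩)
    have hsub : A ⊆ p.roots.toFinset := fun a ha =>
      Multiset.mem_toFinset.2 ((mem_roots hp.ne_zero).2 (hroot a ha))
    calc #A ≤ #p.roots.toFinset := card_le_card hsub
      _ ≤ Multiset.card p.roots := Multiset.toFinset_card_le _
      _ ≤ p.natDegree := card_roots' p
      _ = n := hp.natDegree_eq

end Polynomial

theorem Finset.forall_iff_mem_iff {α : Type*} [Fintype α] [DecidableEq α] (P : α → Prop)
    (S : Finset α) : (∀ a, P a ↔ a ∈ S) ↔ (∀ a ∈ S, P a) ∧ ∀ a ∈ Sᶜ, ¬P a := by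
  simp only [mem_compl, not_imp_not]
  exact ⟨fun h => ⟨fun a => (h a).2, fun a => (h a).1⟩, fun h a => ⟨h.2 a, h.1 a⟩⟩

theorem Nat.card_subtype_and_forall_not {α ι : Type*} [DecidableEq ι] (Q : α → Prop)
    [Finite {x // Q x}] (s : Finset ι) (P : ι → α → Prop) :
    (Nat.card {x // Q x ∧ ∀ i ∈ s, ¬P i x} : ℤ) =
      ∑ t ∈ s.powerset, (-1 : ℤ) ^ #t * Nat.card {x // Q x ∧ ∀ i ∈ t, P i x} := by
  classical
  have : Fintype {x // Q x} := .ofFinite _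
  have hcard (R : α → Prop) : Nat.card {x // Q x ∧ R x} = #{y : {x // Q x} | R y} := by
    rw [← Nat.card_congr (Equiv.subtypeSubtypeEquivSubtypeInter Q R), Nat.card_eq_fintype_card,
      Fintype.card_subtype]
  simp only [hcard]
  convert inclusion_exclusion_card_inf_compl s fun i => ({y | P i y} : Finset {x // Q x}) <;>
    ext <;> simp [mem_inf]

theorem Finset.sum_range_choose_smul_ite {R : Type*} [Semiring R] (t m : ℕ) (f : ℕ → R) :
    ∑ j ∈ range (t + 1), t.choose j • (if j ≤ m then f j else 0) =
      ∑ j ∈ range (m + 1), (t.choose j : R) * f j := by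
  set g : ℕ → R := fun j => t.choose j * if j ≤ m then f j else 0
  have hg : ∀ j ≥ min t m + 1, g j = 0 := by
    intro j hj
    rcases le_or_gt j m with hjm | hjm
    · simp [g, Nat.choose_eq_zero_of_lt (show t < j by omega)]
    · simp [g, if_neg (show ¬j ≤ m by omega)]
  calc ∑ j ∈ range (t + 1), t.choose j • (if j ≤ m then f j else 0)
      = ∑ j ∈ range (t + 1), g j := by simp only [g, nsmul_eq_mul]
    _ = ∑ j ∈ range (m + 1), g j :=
      (eventually_constant_sum hg (by omega)).trans (eventually_constant_sum hg (by omega)).symm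
    _ = ∑ j ∈ range (m + 1), (t.choose j : R) * f j :=
      sum_congr rfl fun j hj => by
        simp only [g]
        rw [if_pos (Nat.lt_succ_iff.1 (mem_range.1 hj))]

theorem sum_range_choose_smul_neg_one_pow_mul_ite (t s k q : ℕ) :
    ∑ j ∈ range (t + 1), t.choose j •
        ((-1 : ℤ) ^ j * ((if s + j ≤ k then q ^ (k - s - j) else 0 : ℕ) : ℤ)) =
      if s ≤ k then ∑ j ∈ range (k - s + 1), (t.choose j : ℤ) * (-1) ^ j * (q : ℤ) ^ (k - s - j)
      else 0 := by
  split_ifs with hs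
  · simp only [mul_assoc]
    rw [← sum_range_choose_smul_ite]
    refine sum_congr rfl fun j _ => ?_
    have hj : s + j ≤ k ↔ j ≤ k - s := by omega
    simp only [hj, apply_ite (Nat.cast : ℕ → ℤ), mul_ite, Nat.cast_pow, Nat.cast_zero, mul_zero]
  · exact sum_eq_zero fun j _ => by rw [if_neg (by omega), Nat.cast_zero, mul_zero, smul_zero]

/-- The number of monic polynomials `g` of degree `k` over `F_q` whose set of roots in `F_q`
is exactly `S` is `∑_{j=0}^{k-|S|} C(q-|S|, j) (-1)^j q^{k-|S|-j}` when `|S| ≤ k`,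
and `0` when `|S| > k`. -/
theorem stmt7 {F : Type*} [Field F] [Fintype F] (k : ℕ) (S : Finset F) :
    (Nat.card {g : F[X] // g.Monic ∧ g.natDegree = k ∧
        ∀ α : F, g.eval α = 0 ↔ α ∈ S} : ℤ) =
      if S.card ≤ k then
        ∑ j ∈ Finset.range (k - S.card + 1),
          ((Fintype.card F - S.card).choose j : ℤ) * (-1) ^ j *
            (Fintype.card F : ℤ) ^ (k - S.card - j)
      else 0 := by
  classical
  have hroots : Nat.card {g : F[X] // g.Monic ∧ g.natDegree = k ∧ ∀ α, g.eval α = 0 ↔ α ∈ S} =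
      Nat.card {g : F[X] // (IsMonicOfDegree g k ∧ ∀ a ∈ S, g.eval a = 0) ∧
        ∀ a ∈ Sᶜ, ¬g.eval a = 0} :=
    Nat.card_congr (Equiv.subtypeEquivRight fun g => by
      rw [isMonicOfDegree_iff', forall_iff_mem_iff]
      tauto)
  have hterm (t : Finset F) (ht : t ∈ Sᶜ.powerset) :
      Nat.card {g : F[X] // (IsMonicOfDegree g k ∧ ∀ a ∈ S, g.eval a = 0) ∧
        ∀ a ∈ t, g.eval a = 0} =
      if #S + #t ≤ k then Fintype.card F ^ (k - #S - #t) else 0 := by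
    rw [Nat.sub_sub, ← card_union_of_disjoint (disjoint_compl_right.mono_right (mem_powerset.1 ht)),
      Fintype.card_eq_nat_card, ← natCard_isMonicOfDegree_forall_eval_eq_zero]
    exact Nat.card_congr (Equiv.subtypeEquivRight fun g => by
      simp only [mem_union, or_imp, forall_and, and_assoc])
  rw [hroots, Nat.card_subtype_and_forall_not, sum_congr rfl fun t ht => by rw [hterm t ht],
    sum_powerset_apply_card fun j =>
      (-1 : ℤ) ^ j * ((if #S + j ≤ k then Fintype.card F ^ (k - #S - j) else 0 : ℕ) : ℤ),
    card_compl]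
  exact sum_range_choose_smul_neg_one_pow_mul_ite _ _ _ _
end

section
/- Let H be an additive subgroup of F_q with |H| = n+1 containing 0, let D = H \ {0}, and let γ ∈ H. Then the number of m-tuples (x_1,...,x_m) ∈ D^m with x_1 + ... + x_m = γ equals n^m/(n+1) + ((n+1)·[γ=0] − 1)/(n+1) · (−1)^m, where [γ=0] is 1 if γ = 0 and 0 otherwise. -/
/-!
Write `N m g` for the number of `m`-tuples of nonzero elements of a finite abelian group `A`
summing to `g`, and `n + 1 = |A|`. Dropping the first entry is a bijection from the tuples
counted by `N (m + 1) g` onto the `m`-tuples of nonzero elements whose sum is *not* `g`, so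
`N (m + 1) g + N m g = n ^ m`. Solving this recurrence from `N 0 g = [g = 0]` gives the formula.
-/

open Finset Fintype

namespace AddCommGroup

variable {A : Type*} [AddCommGroup A] [Fintype A] [DecidableEq A]

def nonzeroTuples (m : ℕ) : Finset (Fin m → A) :=
  piFinset fun _ => {0}ᶜ

def nonzeroTuplesSumEq (m : ℕ) (g : A) : Finset (Fin m → A) :=
  (nonzeroTuples m).filter fun x => ∑ i, x i = g

lemma mem_nonzeroTuples {m : ℕ} {x : Fin m → A} : x ∈ nonzeroTuples m ↔ ∀ i, x i ≠ 0 := by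
  simp [nonzeroTuples]

lemma mem_nonzeroTuplesSumEq {m : ℕ} {g : A} {x : Fin m → A} :
    x ∈ nonzeroTuplesSumEq m g ↔ (∀ i, x i ≠ 0) ∧ ∑ i, x i = g := by
  rw [nonzeroTuplesSumEq, mem_filter, mem_nonzeroTuples]

lemma card_nonzeroTuples (m : ℕ) : #(nonzeroTuples (A := A) m) = (card A - 1) ^ m := by
  simp [nonzeroTuples, card_compl]

lemma card_nonzeroTuplesSumEq_zero (g : A) :
    #(nonzeroTuplesSumEq 0 g) = if g = 0 then 1 else 0 := by
  split_ifs with hg <;> simp [nonzeroTuplesSumEq, nonzeroTuples, hg, eq_comm]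

lemma card_nonzeroTuplesSumEq_succ (m : ℕ) (g : A) :
    #(nonzeroTuplesSumEq (m + 1) g) = #((nonzeroTuples m).filter fun y => ∑ i, y i ≠ g) := by
  refine card_nbij' Fin.tail (fun y => Fin.cons (g - ∑ i, y i) y) ?_ ?_ ?_ ?_
  · intro x hx
    obtain ⟨hx0, hsum⟩ := mem_nonzeroTuplesSumEq.1 hx
    rw [Fin.sum_univ_succ] at hsum
    refine mem_filter.2 ⟨mem_nonzeroTuples.2 fun i => hx0 i.succ, fun h => hx0 0 ?_⟩
    rw [show ∑ i : Fin m, x i.succ = g from h] at hsum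
    simpa using hsum
  · intro y hy
    obtain ⟨hy0, hsum⟩ := mem_filter.1 hy
    refine mem_nonzeroTuplesSumEq.2 ⟨Fin.forall_fin_succ.2 ⟨?_, ?_⟩, ?_⟩
    · simpa using sub_ne_zero.2 (Ne.symm hsum)
    · simpa using mem_nonzeroTuples.1 hy0
    · simp [Fin.sum_univ_succ]
  · intro x hx
    have hsum := (mem_nonzeroTuplesSumEq.1 hx).2
    rw [Fin.sum_univ_succ] at hsum
    simp only [← hsum, Fin.tail, add_sub_cancel_right, Fin.cons_self_tail]
  · intro y _
    simp

lemma card_nonzeroTuplesSumEq_succ_add (m : ℕ) (g : A) :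
    #(nonzeroTuplesSumEq (m + 1) g) + #(nonzeroTuplesSumEq m g) = (card A - 1) ^ m := by
  rw [card_nonzeroTuplesSumEq_succ, nonzeroTuplesSumEq, add_comm,
    card_filter_add_card_filter_not, card_nonzeroTuples]

theorem card_mul_card_nonzeroTuplesSumEq (m : ℕ) (g : A) :
    (card A : ℤ) * #(nonzeroTuplesSumEq m g) =
      ((card A : ℤ) - 1) ^ m + (card A * (if g = 0 then 1 else 0) - 1) * (-1) ^ m := by
  induction m with
  | zero => split_ifs with hg <;> simp [card_nonzeroTuplesSumEq_zero, hg]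
  | succ m ih =>
    have key := card_nonzeroTuplesSumEq_succ_add m g
    zify [Fintype.card_pos] at key
    rw [eq_sub_of_add_eq key, mul_sub, ih]
    ring

end AddCommGroup

open AddCommGroup in
lemma AddSubgroup.natCard_tuples_eq_card_nonzeroTuplesSumEq {G : Type*} [AddCommGroup G]
    (H : AddSubgroup G) [Fintype H] [DecidableEq H] (m : ℕ) {γ : G} (hγ : γ ∈ H) :
    Nat.card {x : Fin m → G // (∀ i, x i ∈ H ∧ x i ≠ 0) ∧ ∑ i, x i = γ} =
      #(nonzeroTuplesSumEq (A := H) m ⟨γ, hγ⟩) := by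
  rw [← Nat.card_eq_finsetCard]
  refine Nat.card_congr
    { toFun := fun x => ⟨fun i => ⟨x.1 i, (x.2.1 i).1⟩, ?_⟩
      invFun := fun y => ⟨fun i => y.1 i, ?_⟩
      left_inv := fun x => rfl
      right_inv := fun y => rfl }
  · refine mem_nonzeroTuplesSumEq.2 ⟨fun i h => (x.2.1 i).2 (congrArg Subtype.val h), ?_⟩
    ext
    simpa using x.2.2
  · obtain ⟨hy0, hsum⟩ := mem_nonzeroTuplesSumEq.1 y.2
    refine ⟨fun i => ⟨(y.1 i).2, fun h => hy0 i (Subtype.ext h)⟩, ?_⟩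
    simpa using congrArg Subtype.val hsum

theorem stmt10_general {F : Type*} [Field F] [DecidableEq F] (H : AddSubgroup F) (n m : ℕ)
    (hn : Nat.card H = n + 1) (γ : F) (hγ : γ ∈ H) :
    (Nat.card {x : Fin m → F //
        (∀ i, x i ∈ H ∧ x i ≠ 0) ∧ ∑ i, x i = γ} : ℚ) =
      (n : ℚ) ^ m / (n + 1) +
        (((n + 1) * (if γ = 0 then 1 else 0) - 1) / (n + 1)) * (-1) ^ m := by
  have : Finite H := Nat.finite_of_card_ne_zero (by omega)
  have := Fintype.ofFinite H
  have key := AddCommGroup.card_mul_card_nonzeroTuplesSumEq (A := H) m ⟨γ, hγ⟩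
  rw [← Nat.card_eq_fintype_card, hn, ← H.natCard_tuples_eq_card_nonzeroTuplesSumEq m hγ] at key
  have keyℚ := congrArg (Int.cast : ℤ → ℚ) key
  push_cast [AddSubgroup.mk_eq_zero, add_sub_cancel_right] at keyℚ
  field_simp
  linear_combination keyℚ

/-- Let `H` be an additive subgroup of `F_q` with `|H| = n+1`, `D = H \ {0}`, and `γ ∈ H`.
The number of `m`-tuples from `D` summing to `γ` equals
`n^m/(n+1) + ((n+1)[γ=0] - 1)/(n+1) · (-1)^m`. -/
theorem stmt10 {F : Type*} [Field F] [Fintype F] [DecidableEq F] (H : AddSubgroup F) (n m : ℕ)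
    (hn : Nat.card H = n + 1) (hm : 1 ≤ m) (γ : F) (hγ : γ ∈ H) :
    (Nat.card {x : Fin m → F //
        (∀ i, x i ∈ H ∧ x i ≠ 0) ∧ ∑ i, x i = γ} : ℚ) =
      (n : ℚ) ^ m / (n + 1) +
        (((n + 1) * (if γ = 0 then 1 else 0) - 1) / (n + 1)) * (-1) ^ m :=
  stmt10_general H n m hn γ hγ
end

section
/- Let p be an odd prime, q a power of p, D an additive subgroup of F_q with |D| = n, and γ ∈ F_q. Let Ū_m(γ) be the number of m-tuples of pairwise distinct elements (x_1,...,x_m) ∈ D^m with x_1 + ... + x_m = γ. Then for γ ∈ D: Ū_m(γ)/m! = (1/n) C(n, m) + (−1)^{m + m/p} ((n·[γ=0] − 1)/n) C(n/p, m/p) if p | m, and Ū_m(γ)/m! = (1/n) C(n, m) if p ∤ m. -/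
/-!
Grouping injective tuples by their image, `Ū_m(γ) / m!` is the number `N` of `m`-subsets of `D`
with sum `γ`. Detecting the sum with the additive characters of `D` gives
`n N = ∑_ψ ψ(-γ) e_m(ψ)`, where `e_m(ψ)` is the `m`-th elementary symmetric function of the values
of `ψ`. The trivial character contributes `C(n, m)`. Since `D` is elementary abelian, a nontrivial
`ψ` takes every `p`-th root of unity `ζ^i` exactly `n / p` times, so
`∏_d (X + ψ d) = (∏_i (X + ζ^i))^(n/p) = (X^p - (-1)^p)^(n/p)`, whose coefficients give
`e_m(ψ) = [p ∣ m] (-1)^(m + m/p) C(n/p, m/p)`; summing `ψ(-γ)` over the nontrivial `ψ` yields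
`n [γ = 0] - 1`.
-/

open Finset Polynomial

theorem IsPrimitiveRoot.prod_range_X_add_C_pow {R : Type*} [CommRing R] [IsDomain R] {ζ : R}
    {p : ℕ} (hζ : IsPrimitiveRoot ζ p) (hp : 0 < p) :
    ∏ i ∈ range p, (X + C (ζ ^ i)) = X ^ p + C ((-1) ^ (p + 1)) := by
  have h := X_pow_sub_C_eq_prod hζ hp (α := -1) rfl
  simp only [mul_neg, mul_one, map_neg, sub_neg_eq_add] at h
  rw [← h, sub_eq_add_neg, ← map_neg, pow_succ, mul_neg_one]

theorem Polynomial.coeff_X_pow_add_C_pow_sub {R : Type*} [CommSemiring R] {p c m : ℕ}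
    (hp : 0 < p) (a : R) (hm : m ≤ p * c) :
    ((X ^ p + C a) ^ c).coeff (p * c - m) =
      if p ∣ m then a ^ (m / p) * (c.choose (m / p) : R) else 0 := by
  have hexpand : (X ^ p + C a) ^ c = expand R p ((X + C a) ^ c) := by simp
  rw [hexpand, coeff_expand hp, coeff_X_add_C_pow]
  by_cases hpm : p ∣ m
  · obtain ⟨k, rfl⟩ := hpm
    have hk : k ≤ c := le_of_mul_le_mul_left hm hp
    rw [if_pos (Nat.dvd_sub (dvd_mul_right p c) (dvd_mul_right p k)), if_pos (dvd_mul_right p k),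
      ← Nat.mul_sub, Nat.mul_div_cancel_left _ hp, Nat.mul_div_cancel_left _ hp,
      Nat.sub_sub_self hk, Nat.choose_symm hk]
  · rw [if_neg hpm, if_neg fun h => hpm ?_]
    simpa [Nat.sub_sub_self hm] using Nat.dvd_sub (dvd_mul_right p c) h

namespace AddChar

variable {G M : Type*} [AddCommGroup G] [CommMonoid M] {p : ℕ}

theorem isPrimitiveRoot_of_ne_one (hp : p.Prime) (hG : ∀ g : G, p • g = 0) (ψ : AddChar G M)
    {d : G} (hd : ψ d ≠ 1) : IsPrimitiveRoot (ψ d) p := by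
  have := Fact.mk hp
  rw [IsPrimitiveRoot.iff_orderOf]
  exact orderOf_eq_prime (by rw [← map_nsmul_eq_pow, hG, map_zero_eq_one]) hd

theorem map_sum_eq_prod {ι : Type*} (ψ : AddChar G M) (s : Finset ι) (f : ι → G) :
    ψ (∑ i ∈ s, f i) = ∏ i ∈ s, ψ (f i) := by
  induction s using Finset.cons_induction with
  | empty => simp
  | cons a s ha ih => rw [sum_cons, prod_cons, map_add_eq_mul, ih]

theorem card_fiber_eq_of_mem_image [Fintype G] [DecidableEq M] (ψ : AddChar G M) {z : M}
    (hz : z ∈ univ.image ψ) : #{d | ψ d = z} = #{d | ψ d = 1} := by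
  obtain ⟨e, -, rfl⟩ := mem_image.mp hz
  refine card_equiv (Equiv.subRight e) fun d => ?_
  simp only [mem_filter_univ, Equiv.subRight_apply]
  conv_lhs => rw [← sub_add_cancel d e, map_add_eq_mul]
  exact (ψ.val_isUnit e).mul_eq_right

variable {R : Type*} [CommRing R] [IsDomain R]

theorem image_univ_eq_image_range_pow [Fintype G] [DecidableEq R] (hp : p.Prime)
    (hG : ∀ g : G, p • g = 0) (ψ : AddChar G R) {e : G} (he : ψ e ≠ 1) :
    univ.image ψ = (range p).image (ψ e ^ ·) := by
  have : NeZero p := ⟨hp.ne_zero⟩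
  ext z
  simp only [mem_image, mem_univ, true_and, mem_range]
  constructor
  · rintro ⟨d, rfl⟩
    exact (isPrimitiveRoot_of_ne_one hp hG ψ he).eq_pow_of_pow_eq_one
      (by rw [← map_nsmul_eq_pow, hG, map_zero_eq_one])
  · rintro ⟨i, -, rfl⟩
    exact ⟨i • e, map_nsmul_eq_pow ψ i e⟩

theorem card_eq_mul_card_ker [Fintype G] [DecidableEq R] (hp : p.Prime)
    (hG : ∀ g : G, p • g = 0) (ψ : AddChar G R) (hψ : ψ ≠ 0) :
    Fintype.card G = p * #{d | ψ d = 1} := by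
  obtain ⟨e, he⟩ := ne_zero_iff.mp hψ
  rw [← card_univ, card_eq_sum_card_image ψ, sum_congr rfl fun z => card_fiber_eq_of_mem_image ψ,
    sum_const, smul_eq_mul, image_univ_eq_image_range_pow hp hG ψ he,
    card_image_of_injOn (isPrimitiveRoot_of_ne_one hp hG ψ he).injOn_pow, card_range]

theorem prod_X_add_C_eq [Fintype G] (hp : p.Prime) (hG : ∀ g : G, p • g = 0)
    (ψ : AddChar G R) (hψ : ψ ≠ 0) :
    ∏ d, (X + C (ψ d)) = (X ^ p + C ((-1) ^ (p + 1))) ^ (Fintype.card G / p) := by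
  classical
  obtain ⟨e, he⟩ := ne_zero_iff.mp hψ
  have hζ := isPrimitiveRoot_of_ne_one hp hG ψ he
  rw [prod_comp (fun z => X + C z) ψ,
    prod_congr rfl fun z hz => by rw [card_fiber_eq_of_mem_image ψ hz], prod_pow,
    image_univ_eq_image_range_pow hp hG ψ he, prod_image hζ.injOn_pow,
    hζ.prod_range_X_add_C_pow hp.pos, card_eq_mul_card_ker hp hG ψ hψ,
    Nat.mul_div_cancel_left _ hp.pos]

theorem sum_powersetCard_prod_eq [Fintype G] (hp : p.Prime) (hG : ∀ g : G, p • g = 0)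
    (ψ : AddChar G R) (hψ : ψ ≠ 0) (m : ℕ) :
    ∑ t ∈ univ.powersetCard m, ∏ d ∈ t, ψ d =
      if p ∣ m then (-1) ^ (m + m / p) * ((Fintype.card G / p).choose (m / p) : R) else 0 := by
  classical
  have hprod := prod_X_add_C_eq hp hG ψ hψ
  obtain ⟨c, hn⟩ : p ∣ Fintype.card G := ⟨_, card_eq_mul_card_ker hp hG ψ hψ⟩
  rw [hn, Nat.mul_div_cancel_left _ hp.pos] at hprod ⊢
  rcases le_or_gt m (p * c) with hm | hm
  · have hcoeff := prod_X_add_C_coeff univ ψ (k := p * c - m) (by simp [hn])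
    rw [card_univ, hn, Nat.sub_sub_self hm, hprod, coeff_X_pow_add_C_pow_sub hp.pos _ hm] at hcoeff
    rw [← hcoeff]
    split_ifs with hpm
    · obtain ⟨k, rfl⟩ := hpm
      rw [Nat.mul_div_cancel_left _ hp.pos, ← pow_mul]
      congr 2
      ring
    · rfl
  · rw [powersetCard_eq_empty.mpr (by simpa [hn] using hm), sum_empty]
    split_ifs with hpm
    · have hc : c < m / p := by simpa [hp.pos] using Nat.div_lt_div_of_lt_of_dvd hpm hm
      rw [Nat.choose_eq_zero_of_lt hc, Nat.cast_zero, mul_zero]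
    · rfl

end AddChar

theorem card_mul_card_filter_powersetCard_sum_eq {G : Type*} [AddCommGroup G] [Fintype G]
    [DecidableEq G] {p : ℕ} (hp : p.Prime) (hG : ∀ g : G, p • g = 0) (m : ℕ) (γ : G) :
    (Fintype.card G : ℂ) * #{s ∈ univ.powersetCard m | ∑ d ∈ s, d = γ} =
      (Fintype.card G).choose m +
        if p ∣ m then
          (-1) ^ (m + m / p) * ((Fintype.card G : ℂ) * (if γ = 0 then 1 else 0) - 1) *
            ((Fintype.card G / p).choose (m / p) : ℂ)
        else 0 := by
  set E : ℂ := if p ∣ m then (-1) ^ (m + m / p) * ((Fintype.card G / p).choose (m / p) : ℂ) else 0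
  have hesymm : ∀ ψ : AddChar G ℂ, ∑ s ∈ univ.powersetCard m, ∏ d ∈ s, ψ d =
      E + if ψ = 0 then ((Fintype.card G).choose m - E) else 0 := by
    intro ψ
    split_ifs with hψ
    · simp [hψ, card_powersetCard]
    · rw [AddChar.sum_powersetCard_prod_eq hp hG ψ hψ, add_zero]
  calc (Fintype.card G : ℂ) * #{s ∈ univ.powersetCard m | ∑ d ∈ s, d = γ}
      = ∑ s ∈ univ.powersetCard m, ∑ ψ : AddChar G ℂ, ψ (∑ d ∈ s, d - γ) := by
        simp_rw [AddChar.sum_apply_eq_ite, sub_eq_zero, sum_ite, sum_const_zero, add_zero,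
          sum_const, nsmul_eq_mul, mul_comm]
    _ = ∑ ψ : AddChar G ℂ, ψ (-γ) * ∑ s ∈ univ.powersetCard m, ∏ d ∈ s, ψ d := by
        rw [sum_comm]
        simp_rw [mul_sum, sub_eq_neg_add, AddChar.map_add_eq_mul, AddChar.map_sum_eq_prod]
    _ = E * ∑ ψ : AddChar G ℂ, ψ (-γ) + ((Fintype.card G).choose m - E) := by
        simp_rw [hesymm, mul_add, mul_ite, mul_zero, sum_add_distrib, sum_ite_eq', mem_univ,
          if_true, AddChar.zero_apply, one_mul, mul_sum, mul_comm]
    _ = _ := by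
        simp only [AddChar.sum_apply_eq_ite, neg_eq_zero, E]
        split_ifs <;> ring

section Tuples

variable {α : Type*} [Fintype α] [DecidableEq α] {m : ℕ}

noncomputable def equivOfImageEq (s : Finset α) (hs : #s = m) :
    {y : Fin m → α // univ.image y = s} ≃ (Fin m ≃ s) where
  toFun y := Equiv.ofBijective (fun i => ⟨y.1 i, y.2.le (mem_image_of_mem _ (mem_univ i))⟩) <|
    (Fintype.bijective_iff_surjective_and_card _).mpr ⟨fun z => by
      obtain ⟨i, -, hi⟩ := mem_image.mp (y.2.ge z.2)
      exact ⟨i, Subtype.ext hi⟩, by simp [hs]⟩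
  invFun e := ⟨fun i => e i, by
    ext z
    simp only [mem_image, mem_univ, true_and]
    exact ⟨fun ⟨i, hi⟩ => hi ▸ (e i).2, fun h => ⟨e.symm ⟨z, h⟩, by simp⟩⟩⟩
  left_inv y := rfl
  right_inv e := by ext; rfl

theorem card_filter_image_eq (s : Finset α) (hs : #s = m) :
    #{y : Fin m → α | univ.image y = s} = m.factorial := by
  rw [← Fintype.card_subtype, Fintype.card_congr (equivOfImageEq s hs),
    Fintype.card_equiv (s.equivFinOfCardEq hs).symm, Fintype.card_fin]

theorem card_filter_injective_image (P : Finset α → Prop) [DecidablePred P] :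
    #{y : Fin m → α | Function.Injective y ∧ P (univ.image y)} =
      m.factorial * #{s ∈ univ.powersetCard m | P s} := by
  rw [card_eq_sum_card_fiberwise (f := fun y => univ.image y) (t := {s ∈ univ.powersetCard m | P s}),
    sum_congr rfl fun s hs => ?_, sum_const, smul_eq_mul, mul_comm]
  · rw [mem_filter, mem_powersetCard] at hs
    rw [← card_filter_image_eq s hs.1.2, filter_filter]
    congr 1 with y
    simp only [mem_filter_univ]
    refine ⟨fun h => h.2, fun h => ⟨⟨fun a b hab => ?_, h ▸ hs.2⟩, h⟩⟩
    exact injOn_of_card_image_eq (s := univ) (by simp [h, hs.1.2]) (by simp) (by simp) hab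
  · intro y hy
    rw [coe_filter_univ] at hy
    simp [mem_powersetCard, card_image_of_injective _ hy.1, hy.2]

theorem card_injective_sum_eq {M : Type*} [AddCommMonoid M] [Fintype M] [DecidableEq M] (m : ℕ)
    (γ : M) :
    Nat.card {y : Fin m → M // Function.Injective y ∧ ∑ i, y i = γ} =
      m.factorial * #{s ∈ univ.powersetCard m | ∑ d ∈ s, d = γ} := by
  rw [Nat.card_eq_fintype_card, Fintype.card_subtype, ← card_filter_injective_image]
  refine congrArg card (filter_congr fun y _ => and_congr_right fun hy => ?_)
  rw [sum_image fun a _ b _ hab => hy hab]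

end Tuples

theorem AddSubmonoidClass.card_injective_sum_eq {M ι A : Type*} [AddCommMonoid M] [Fintype ι]
    [SetLike A M] [AddSubmonoidClass A M] (S : A) {γ : M} (hγ : γ ∈ S) :
    Nat.card {x : ι → M // (∀ i, x i ∈ S) ∧ Function.Injective x ∧ ∑ i, x i = γ} =
      Nat.card {y : ι → S // Function.Injective y ∧ ∑ i, y i = ⟨γ, hγ⟩} := by
  refine Nat.card_congr
    { toFun x := ⟨fun i => ⟨x.1 i, x.2.1 i⟩, fun a b h => x.2.2.1 (congrArg Subtype.val h),
        Subtype.ext (by simpa using x.2.2.2)⟩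
      invFun y := ⟨fun i => y.1 i, fun i => (y.1 i).2, fun a b h => y.2.1 (Subtype.ext h),
        by simpa using congrArg Subtype.val y.2.2⟩
      left_inv _ := rfl
      right_inv _ := rfl }

theorem stmt14_general {F : Type*} [Field F] [Fintype F] [DecidableEq F] (p : ℕ) (hp : p.Prime)
    [CharP F p] (D : AddSubgroup F) (n m : ℕ) (hn : Nat.card D = n)
    (γ : F) (hγ : γ ∈ D) :
    (Nat.card {x : Fin m → F // (∀ i, x i ∈ D) ∧ Function.Injective x ∧
        ∑ i, x i = γ} : ℚ) / (m.factorial : ℚ) =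
      (n.choose m : ℚ) / n +
        (if p ∣ m then
          (-1 : ℚ) ^ (m + m / p) *
            (((n : ℚ) * (if γ = 0 then 1 else 0) - 1) / n) *
            ((n / p).choose (m / p) : ℚ)
        else 0) := by
  classical
  have := Fintype.ofFinite D
  have hD : ∀ g : D, p • g = 0 := fun g =>
    Subtype.ext (by simp [nsmul_eq_mul, CharP.cast_eq_zero])
  have hcard : Fintype.card D = n := by rw [← Nat.card_eq_fintype_card, hn]
  have hn0 : (n : ℚ) ≠ 0 := by rw [← hn]; exact_mod_cast Nat.card_pos.ne'
  have hcount : (n : ℚ) * #{s ∈ univ.powersetCard m | ∑ d ∈ s, d = (⟨γ, hγ⟩ : D)} =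
      n.choose m + if p ∣ m then
        (-1) ^ (m + m / p) * ((n : ℚ) * (if γ = 0 then 1 else 0) - 1) * ((n / p).choose (m / p))
      else 0 := by
    have h := card_mul_card_filter_powersetCard_sum_eq hp hD m ⟨γ, hγ⟩
    simp only [hcard, AddSubgroup.mk_eq_zero] at h
    exact_mod_cast h
  rw [AddSubmonoidClass.card_injective_sum_eq D hγ, card_injective_sum_eq, Nat.cast_mul,
    mul_div_cancel_left₀ _ (by positivity)]
  split_ifs at hcount ⊢ <;> field_simp <;> linear_combination hcount

/-- Let `F_q` have odd characteristic `p`, let `D` be an additive subgroup of size `n`,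
and `γ ∈ D`.  Let `Ū_m(γ)` count `m`-tuples of pairwise distinct elements of `D` summing
to `γ`.  Then `Ū_m(γ)/m! = C(n,m)/n + [p ∣ m] (-1)^{m+m/p} ((n[γ=0]-1)/n) C(n/p, m/p)`. -/
theorem stmt14 {F : Type*} [Field F] [Fintype F] [DecidableEq F] (p : ℕ) (hp : p.Prime) (hodd : p ≠ 2)
    [CharP F p] (D : AddSubgroup F) (n m : ℕ) (hn : Nat.card D = n)
    (γ : F) (hγ : γ ∈ D) :
    (Nat.card {x : Fin m → F // (∀ i, x i ∈ D) ∧ Function.Injective x ∧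
        ∑ i, x i = γ} : ℚ) / (m.factorial : ℚ) =
      (n.choose m : ℚ) / n +
        (if p ∣ m then
          (-1 : ℚ) ^ (m + m / p) *
            (((n : ℚ) * (if γ = 0 then 1 else 0) - 1) / n) *
            ((n / p).choose (m / p) : ℚ)
        else 0) :=
  stmt14_general p hp D n m hn γ hγ
end

section
/- Let 0 ∉ D, D ∪ {0} an additive subgroup of F_q of size n+1, and γ ∉ D ∪ {0}. Then the number of monic polynomials of degree k+1 over F_q with coefficient of x^k equal to γ and exactly r distinct roots in D equals q^{k−r} C(n,r) Σ_{j=0}^{k−r} (−q)^{−j} C(n−r, j). -/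
/-!
A counted polynomial factors uniquely as `f = (∏_{t ∈ R} (X - t)) * u`, where `R` is its set of
roots in `D = H \ {0}` and `u` is monic of degree `k + 1 - r`, with next coefficient `γ + ∑ R`
and no root in `D \ R`. Monic polynomials of degree `m` with prescribed next coefficient that
vanish on a set `T` number `q ^ (m - 1 - |T|)` when `|T| < m` and none when `|T| ≥ m`: for
`|T| = m` the only candidate is `∏_{t ∈ T} (X - t)`, whose next coefficient would force
`γ ∈ H`. Inclusion–exclusion over `T ⊆ D \ R` gives the inner sum, and `R` can be chosen in
`C(n, r)` ways.
-/

open Polynomial Finset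

namespace Finset

variable {α ι : Type*}

theorem card_filter_univ_coe (A : Finset α) (Q : α → Prop) [DecidablePred Q] :
    #{a : A | Q a} = #{a ∈ A | Q a} := by
  classical
  rw [univ_eq_attach, filter_attach', card_map, card_attach]
  exact congrArg card (filter_congr fun x hx => by simp [hx])

open scoped Classical in
theorem inclusion_exclusion_card_filter_forall_not {R : Type*} [CommRing R] (A : Finset α)
    (s : Finset ι) (p : ι → α → Prop) :
    (#{a ∈ A | ∀ i ∈ s, ¬ p i a} : R) =
      ∑ t ∈ s.powerset, (-1) ^ #t * (#{a ∈ A | ∀ i ∈ t, p i a} : R) := by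
  have key := inclusion_exclusion_sum_inf_compl s (fun i => ({a : A | p i a} : Finset A))
    (fun _ => (1 : R))
  simp only [sum_const, nsmul_one, zsmul_eq_mul, Int.cast_pow, Int.cast_neg, Int.cast_one] at key
  convert key using 3
  · rw [← card_filter_univ_coe]
    congr 2; ext; simp [mem_inf]
  · rw [← card_filter_univ_coe]
    congr 3; ext; simp [mem_inf]

theorem filter_eq_iff_of_subset [DecidableEq α] {s t : Finset α} (h : t ⊆ s) {p : α → Prop}
    [DecidablePred p] :
    s.filter p = t ↔ (∀ x ∈ t, p x) ∧ ∀ x ∈ s \ t, ¬ p x := by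
  constructor
  · rintro rfl
    simp +contextual
  · rintro ⟨hpos, hneg⟩
    ext x
    simp only [mem_filter] at hneg ⊢
    grind

theorem sum_powerset_apply_card_of_eq_zero {M : Type*} [AddCommMonoid M] (s : Finset α) {m : ℕ}
    (f : ℕ → M) (hf : ∀ j, m ≤ j → f j = 0) :
    ∑ t ∈ s.powerset, f #t = ∑ j ∈ range m, (#s).choose j • f j := by
  rw [sum_powerset_apply_card,
    sum_subset (range_subset_range.mpr (Nat.le_add_right (#s + 1) m)) fun j _ hj => by
      rw [Nat.choose_eq_zero_of_lt (by simp at hj; omega), zero_smul],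
    ← sum_subset (range_subset_range.mpr (Nat.le_add_left m (#s + 1))) fun j _ hj => by
      rw [hf j (by simpa using hj), smul_zero]]

end Finset

namespace Polynomial

variable {F : Type*} [Field F]

theorem Monic.degree_sub_lt_natDegree_pred_iff {f g : F[X]} (hg : g.Monic) :
    (f - g).degree < ↑(g.natDegree - 1) ↔
      f.Monic ∧ f.natDegree = g.natDegree ∧ f.nextCoeff = g.nextCoeff := by
  constructor
  · intro h
    have hlt : (f - g).degree < g.degree :=
      h.trans_le (degree_eq_natDegree hg.ne_zero ▸ WithBot.coe_le_coe.mpr (Nat.sub_le _ 1))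
    have hf : f = g + (f - g) := by ring
    have hdeg : f.natDegree = g.natDegree := by
      rw [hf, natDegree_add_eq_left_of_degree_lt hlt]
    refine ⟨hf ▸ hg.add_of_left hlt, hdeg, ?_⟩
    rw [nextCoeff, nextCoeff, hdeg, hf, coeff_add, coeff_eq_zero_of_degree_lt h, add_zero]
  · rintro ⟨hf, hdeg, hnext⟩
    rw [degree_lt_iff_coeff_zero]
    intro i hi
    rw [coeff_sub, sub_eq_zero]
    rcases Nat.lt_or_ge g.natDegree i with hlt | hle
    · rw [coeff_eq_zero_of_natDegree_lt hlt, coeff_eq_zero_of_natDegree_lt (hdeg ▸ hlt)]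
    rcases eq_or_ne i g.natDegree with rfl | hne
    · rw [← hdeg]; nth_rw 2 [hdeg]; rw [hf.coeff_natDegree, hg.coeff_natDegree]
    obtain rfl : i = g.natDegree - 1 := by omega
    have hpos : 0 < g.natDegree := by omega
    rwa [nextCoeff_of_natDegree_pos hpos, nextCoeff_of_natDegree_pos (hdeg ▸ hpos), hdeg] at hnext

theorem monic_X_pow_add_C_mul_X_pow_pred {m : ℕ} (hm : 1 ≤ m) (β : F) :
    (X ^ m + C β * X ^ (m - 1)).Monic ∧ (X ^ m + C β * X ^ (m - 1)).natDegree = m ∧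
      (X ^ m + C β * X ^ (m - 1)).nextCoeff = β := by
  have hlt : (C β * X ^ (m - 1)).degree < (m : WithBot ℕ) :=
    (degree_C_mul_X_pow_le _ _).trans_lt (by exact_mod_cast Nat.sub_lt hm one_pos)
  have hdeg : (X ^ m + C β * X ^ (m - 1)).natDegree = m := by
    rw [natDegree_add_eq_left_of_degree_lt (by rwa [degree_X_pow]), natDegree_X_pow]
  refine ⟨monic_X_pow_add hlt, hdeg, ?_⟩
  rw [nextCoeff_of_natDegree_pos (by omega), hdeg]
  simp [coeff_X_pow, show m - 1 ≠ m by omega]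

theorem prod_X_sub_C_dvd_iff {T : Finset F} {f : F[X]} :
    ∏ t ∈ T, (X - C t) ∣ f ↔ ∀ t ∈ T, f.eval t = 0 := by
  rcases eq_or_ne f 0 with rfl | hf
  · simp
  rw [prod_eq_multiset_prod, Multiset.prod_X_sub_C_dvd_iff_le_roots hf, val_le_iff_val_subset]
  simp [Multiset.subset_iff, hf]

variable [Fintype F]

open scoped Classical

theorem finite_setOf_monic_natDegree_nextCoeff (m : ℕ) (β : F) :
    {f : F[X] | f.Monic ∧ f.natDegree = m ∧ f.nextCoeff = β}.Finite := by
  have : Finite (degreeLT F (m + 1)) := .of_equiv _ (degreeLTEquiv F (m + 1)).toEquiv.symm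
  refine (degreeLT F (m + 1) : Set F[X]).toFinite.subset fun f ⟨hf, hdeg, _⟩ => ?_
  rw [SetLike.mem_coe, mem_degreeLT, degree_eq_natDegree hf.ne_zero, hdeg]
  exact_mod_cast Nat.lt_succ_self m

noncomputable def monicWith (m : ℕ) (β : F) : Finset F[X] :=
  (finite_setOf_monic_natDegree_nextCoeff m β).toFinset

@[simp]
theorem mem_monicWith {m : ℕ} {β : F} {f : F[X]} :
    f ∈ monicWith m β ↔ f.Monic ∧ f.natDegree = m ∧ f.nextCoeff = β :=
  Set.Finite.mem_toFinset _

theorem card_monicWith {m : ℕ} (hm : 1 ≤ m) (β : F) :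
    #(monicWith m β) = Fintype.card F ^ (m - 1) := by
  obtain ⟨hg, hdeg, hnext⟩ := monic_X_pow_add_C_mul_X_pow_pred hm β
  have hmem (f : F[X]) :
      f ∈ monicWith m β ↔ f - (X ^ m + C β * X ^ (m - 1)) ∈ degreeLT F (m - 1) := by
    have := hg.degree_sub_lt_natDegree_pred_iff (f := f)
    rw [hdeg, hnext] at this
    rw [mem_monicWith, mem_degreeLT, this]
  rw [← Nat.card_eq_finsetCard, Nat.card_congr ((Equiv.subRight _).subtypeEquiv hmem),
    Nat.card_congr (degreeLTEquiv F (m - 1)).toEquiv, Nat.card_eq_fintype_card,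
    Fintype.card_fun, Fintype.card_fin]

theorem natCard_monic_natDegree_coeff (k : ℕ) (γ : F) (Q : F[X] → Prop) [DecidablePred Q] :
    Nat.card {f : F[X] // f.Monic ∧ f.natDegree = k + 1 ∧ f.coeff k = γ ∧ Q f} =
      #{f ∈ monicWith (k + 1) γ | Q f} := by
  refine Nat.subtype_card _ fun f => ?_
  rw [mem_filter, mem_monicWith, and_assoc, and_assoc]
  refine and_congr_right fun _ => and_congr_right fun hdeg => ?_
  rw [nextCoeff_of_natDegree_pos (by omega), hdeg, Nat.add_sub_cancel]

theorem monicWith_zero_of_ne_zero {β : F} (hβ : β ≠ 0) : monicWith 0 β = ∅ := by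
  refine eq_empty_of_forall_notMem fun f hf => hβ ?_
  obtain ⟨-, hdeg, rfl⟩ := mem_monicWith.mp hf
  rw [nextCoeff, if_pos hdeg]

theorem image_mul_monicWith {P : F[X]} (hP : P.Monic) {m : ℕ} (hPm : P.natDegree ≤ m) (β : F) :
    (monicWith (m - P.natDegree) (β - P.nextCoeff)).image (P * ·) =
      {f ∈ monicWith m β | P ∣ f} := by
  ext f
  simp only [mem_image, mem_filter, mem_monicWith]
  constructor
  · rintro ⟨u, ⟨hu, hdeg, hnext⟩, rfl⟩
    refine ⟨⟨hP.mul hu, ?_, ?_⟩, dvd_mul_right P u⟩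
    · rw [hP.natDegree_mul hu]; omega
    · rw [hP.nextCoeff_mul hu, hnext]; ring
  · rintro ⟨⟨hf, hdeg, hnext⟩, u, rfl⟩
    have hu := hP.of_mul_monic_left hf
    refine ⟨u, ⟨hu, ?_, ?_⟩, rfl⟩
    · rw [hP.natDegree_mul hu] at hdeg; omega
    · rw [hP.nextCoeff_mul hu] at hnext; rw [← hnext]; ring

theorem image_mul_prod_X_sub_C_monicWith {T : Finset F} {m : ℕ} (hT : #T ≤ m) (β : F) :
    (monicWith (m - #T) (β + ∑ t ∈ T, t)).image ((∏ t ∈ T, (X - C t)) * ·) =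
      {f ∈ monicWith m β | ∀ t ∈ T, f.eval t = 0} := by
  have hdeg : (∏ t ∈ T, (X - C t)).natDegree = #T := natDegree_finsetProd_X_sub_C_eq_card T id
  have hnext : (∏ t ∈ T, (X - C t)).nextCoeff = -∑ t ∈ T, t := prod_X_sub_C_nextCoeff id
  have hP : (∏ t ∈ T, (X - C t)).Monic := monic_prod_X_sub_C id T
  simp_rw [← prod_X_sub_C_dvd_iff]
  rw [← image_mul_monicWith hP (hdeg ▸ hT), hdeg, hnext, sub_neg_eq_add]

theorem card_filter_monicWith_forall_eval_eq_zero {m : ℕ} {β : F} (T : Finset F)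
    (hβ : #T = m → β + ∑ t ∈ T, t ≠ 0) :
    #{f ∈ monicWith m β | ∀ t ∈ T, f.eval t = 0} =
      if #T < m then Fintype.card F ^ (m - 1 - #T) else 0 := by
  have hP : (∏ t ∈ T, (X - C t)).Monic := monic_prod_X_sub_C id T
  by_cases hTm : #T ≤ m
  · rw [← image_mul_prod_X_sub_C_monicWith hTm,
      card_image_of_injective _ (mul_right_injective₀ hP.ne_zero)]
    split_ifs with hlt
    · rw [card_monicWith (by omega)]; congr 1; omega
    · rw [show m - #T = 0 by omega, monicWith_zero_of_ne_zero (hβ (by omega)), card_empty]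
  · rw [if_neg (by omega), card_eq_zero, filter_eq_empty_iff]
    rintro f hf hT
    obtain ⟨hmon, hdeg, -⟩ := mem_monicWith.mp hf
    refine hTm (hdeg ▸ card_le_degree_of_subset_roots fun t ht => ?_)
    exact (mem_roots hmon.ne_zero).mpr (hT t ht)

theorem card_filter_monicWith_filter_eval_eq_zero_eq {D R : Finset F} (hR : R ⊆ D) {m : ℕ}
    (hRm : #R ≤ m) (β : F) :
    #{f ∈ monicWith m β | {s ∈ D | f.eval s = 0} = R} =
      #{u ∈ monicWith (m - #R) (β + ∑ t ∈ R, t) | ∀ s ∈ D \ R, u.eval s ≠ 0} := by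
  have hP : (∏ t ∈ R, (X - C t)).Monic := monic_prod_X_sub_C id R
  rw [filter_congr fun f _ => filter_eq_iff_of_subset hR, ← filter_filter,
    ← image_mul_prod_X_sub_C_monicWith hRm, filter_image,
    card_image_of_injective _ (mul_right_injective₀ hP.ne_zero)]
  refine congrArg card (filter_congr fun u _ => forall₂_congr fun s hs => ?_)
  have hsR : s ∉ R := (mem_sdiff.mp hs).2
  have hPs : (∏ t ∈ R, (X - C t)).eval s ≠ 0 := by
    rw [eval_prod, prod_ne_zero_iff]
    intro t ht
    rw [eval_sub, eval_X, eval_C, sub_ne_zero]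
    exact fun hst => hsR (hst ▸ ht)
  rw [eval_mul, mul_eq_zero, or_iff_right hPs]

theorem card_filter_monicWith_forall_eval_ne_zero {R : Type*} [CommRing R] {m : ℕ} {β : F}
    (S : Finset F) (hβ : ∀ T ⊆ S, #T = m → β + ∑ t ∈ T, t ≠ 0) :
    (#{f ∈ monicWith m β | ∀ s ∈ S, f.eval s ≠ 0} : R) =
      ∑ j ∈ range m, (#S).choose j * ((-1) ^ j * (Fintype.card F : R) ^ (m - 1 - j)) := by
  calc (#{f ∈ monicWith m β | ∀ s ∈ S, f.eval s ≠ 0} : R)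
      = ∑ T ∈ S.powerset,
          (-1) ^ #T * (#{f ∈ monicWith m β | ∀ t ∈ T, f.eval t = 0} : R) := by
        convert inclusion_exclusion_card_filter_forall_not (monicWith m β) S
          fun s f => f.eval s = 0
    _ = ∑ T ∈ S.powerset,
          (-1) ^ #T * ((if #T < m then Fintype.card F ^ (m - 1 - #T) else 0 : ℕ) : R) :=
        sum_congr rfl fun T hT => by
          rw [card_filter_monicWith_forall_eval_eq_zero T (hβ T (mem_powerset.mp hT))]
    _ = _ := by
      rw [sum_powerset_apply_card_of_eq_zero S (m := m)
        (fun j => (-1) ^ j * ((if j < m then Fintype.card F ^ (m - 1 - j) else 0 : ℕ) : R))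
        fun j hj => by rw [if_neg (by omega), Nat.cast_zero, mul_zero]]
      refine sum_congr rfl fun j hj => ?_
      rw [if_pos (mem_range.mp hj), nsmul_eq_mul]
      push_cast
      ring

theorem card_filter_monicWith_card_filter_eval_eq_zero {R : Type*} [CommRing R]
    (D : Finset F) {k r : ℕ} (hr : r ≤ k) {γ : F}
    (hγ : ∀ U ⊆ D, #U = k + 1 → γ + ∑ u ∈ U, u ≠ 0) :
    (#{f ∈ monicWith (k + 1) γ | #{s ∈ D | f.eval s = 0} = r} : R) =
      (#D).choose r * ∑ j ∈ range (k - r + 1),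
        (#D - r).choose j * ((-1) ^ j * (Fintype.card F : R) ^ (k - r - j)) := by
  have hfiber : ∀ Z ∈ D.powersetCard r,
      (#{f ∈ monicWith (k + 1) γ |
          #{s ∈ D | f.eval s = 0} = r ∧ {s ∈ D | f.eval s = 0} = Z} : R) =
        ∑ j ∈ range (k - r + 1),
          (#D - r).choose j * ((-1) ^ j * (Fintype.card F : R) ^ (k - r - j)) := by
    intro Z hZ
    obtain ⟨hZD, hZr⟩ := mem_powersetCard.mp hZ
    have hβ : ∀ T ⊆ D \ Z, #T = k + 1 - #Z → γ + ∑ t ∈ Z, t + ∑ t ∈ T, t ≠ 0 := by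
      intro T hT hTcard
      have hdisj : Disjoint Z T := disjoint_of_subset_right hT disjoint_sdiff
      rw [add_assoc, ← sum_union hdisj]
      exact hγ _ (union_subset hZD (hT.trans sdiff_subset))
        (by rw [card_union_of_disjoint hdisj]; omega)
    rw [filter_congr fun f _ => and_iff_right_of_imp fun h => h ▸ hZr,
      card_filter_monicWith_filter_eval_eq_zero_eq hZD (by omega),
      card_filter_monicWith_forall_eval_ne_zero _ hβ, card_sdiff_of_subset hZD, hZr,
      show k + 1 - r = k - r + 1 by omega, Nat.add_sub_cancel]
  have hmaps : Set.MapsTo (fun f : F[X] => {s ∈ D | f.eval s = 0})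
      ({f ∈ monicWith (k + 1) γ | #{s ∈ D | f.eval s = 0} = r} : Finset F[X])
      (D.powersetCard r) := by
    intro f hf
    rw [mem_coe, mem_filter] at hf
    exact mem_powersetCard.mpr ⟨filter_subset _ _, hf.2⟩
  rw [card_eq_sum_card_fiberwise hmaps, Nat.cast_sum]
  simp only [filter_filter]
  rw [sum_congr rfl hfiber, sum_const, card_powersetCard, nsmul_eq_mul]

end Polynomial

theorem pow_mul_neg_zpow_neg {K : Type*} [Field K] {q : K} (hq : q ≠ 0) {j n : ℕ}
    (hj : j ≤ n) :
    q ^ n * (-q) ^ (-(j : ℤ)) = (-1) ^ j * q ^ (n - j) := by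
  rw [← pow_sub_mul_pow q hj, zpow_neg, zpow_natCast, neg_pow q, mul_inv, ← inv_pow, inv_neg,
    inv_one]
  field_simp

/-- Let `H = D ∪ {0}` be an additive subgroup of `F_q` of size `n+1` with `0 ∉ D`, and
`γ ∉ H`.  The number of monic polynomials of degree `k+1` over `F_q` with coefficient of
`x^k` equal to `γ` and exactly `r` distinct roots in `D` equals
`q^{k-r} C(n,r) ∑_{j=0}^{k-r} (-q)^{-j} C(n-r, j)`. -/
theorem stmt16 {F : Type*} [Field F] [Fintype F] (H : AddSubgroup F) (n k r : ℕ)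
    (hn : Nat.card H = n + 1) (hr : r ≤ k) (γ : F) (hγ : γ ∉ H) :
    (Nat.card {f : F[X] // f.Monic ∧ f.natDegree = k + 1 ∧ f.coeff k = γ ∧
        Nat.card {α : F // α ∈ H ∧ α ≠ 0 ∧ f.eval α = 0} = r} : ℚ) =
      (Fintype.card F : ℚ) ^ (k - r) * (n.choose r : ℚ) *
        ∑ j ∈ Finset.range (k - r + 1),
          (-(Fintype.card F : ℚ)) ^ (-(j : ℤ)) * ((n - r).choose j : ℚ) := by
  classical
  set D : Finset F := {x | x ∈ H ∧ x ≠ 0}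
  have hD : #D = n := by
    have : D = ({x | x ∈ H} : Finset F).erase 0 := by ext; simp [D, and_comm]
    rw [this, card_erase_of_mem (by simp [H.zero_mem]), ← Fintype.card_subtype,
      ← Nat.card_eq_fintype_card, hn, Nat.add_sub_cancel]
  have hγD : ∀ U ⊆ D, #U = k + 1 → γ + ∑ u ∈ U, u ≠ 0 := fun U hU _ hsum => hγ <| by
    rw [eq_neg_of_add_eq_zero_left hsum]
    exact H.neg_mem (H.sum_mem fun u hu => (mem_filter.mp (hU hu)).2.1)
  have hroots (f : F[X]) :
      Nat.card {α : F // α ∈ H ∧ α ≠ 0 ∧ f.eval α = 0} = #{s ∈ D | f.eval s = 0} :=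
    Nat.subtype_card _ fun α => by simp [D, and_assoc]
  have hq : (Fintype.card F : ℚ) ≠ 0 := Nat.cast_ne_zero.mpr Fintype.card_ne_zero
  simp_rw [hroots]
  rw [Polynomial.natCard_monic_natDegree_coeff,
    Polynomial.card_filter_monicWith_card_filter_eval_eq_zero D hr hγD, hD,
    mul_comm _ (n.choose r : ℚ), mul_assoc]
  congr 1
  rw [mul_sum]
  refine sum_congr rfl fun j hj => ?_
  linear_combination
    -((n - r).choose j : ℚ) * pow_mul_neg_zpow_neg hq (Nat.lt_succ_iff.mp (mem_range.mp hj))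
end

section
/- With the setup of a uniformly random monic polynomial g of degree k+ℓ (k ≥ 2) over F_q with the same ℓ leading coefficients as a fixed monic f of degree k+ℓ, and D ⊆ F_q of size n, the variance of the number of distinct roots of g in D equals n(q−1)/q². Equivalently, Σ_g (number of ordered pairs of distinct roots of g in D) = (n² − n) q^{k−2}, summed over the q^k polynomials g equivalent to f. -/
open Polynomial

section Stmt18Aux
open Finset

variable {F : Type*} [Field F]

noncomputable def topP (f : F[X]) (k ℓ : ℕ) : F[X] :=
  ∑ i ∈ Finset.Icc k (k+ℓ), C (f.coeff i) * X ^ i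

noncomputable def tailP (k : ℕ) (c : ℕ → F) : F[X] :=
  ∑ i ∈ Finset.Ico 2 k, C (c (i - 2)) * X ^ i

lemma coeff_topP (f : F[X]) (k ℓ j : ℕ) :
    (topP f k ℓ).coeff j = if k ≤ j ∧ j ≤ k + ℓ then f.coeff j else 0 := by
  classical
  simp [topP, finset_sum_coeff, coeff_C_mul, coeff_X_pow, mul_ite, Finset.sum_ite_eq,
    Finset.mem_Icc]

lemma coeff_tailP (k : ℕ) (c : ℕ → F) (j : ℕ) :
    (tailP k c).coeff j = if 2 ≤ j ∧ j < k then c (j - 2) else 0 := by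
  classical
  simp [tailP, finset_sum_coeff, coeff_C_mul, coeff_X_pow, mul_ite, Finset.sum_ite_eq,
    Finset.mem_Ico]

noncomputable def tP (f : F[X]) (k ℓ : ℕ) (c : ℕ → F) : F[X] := topP f k ℓ + tailP k c

lemma coeff_tP (f : F[X]) (k ℓ : ℕ) (c : ℕ → F) (j : ℕ) :
    (tP f k ℓ c).coeff j =
      if k ≤ j ∧ j ≤ k + ℓ then f.coeff j + (if 2 ≤ j ∧ j < k then c (j-2) else 0)
      else if 2 ≤ j ∧ j < k then c (j - 2) else 0 := by
  rw [tP, coeff_add, coeff_topP, coeff_tailP]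
  split_ifs <;> simp

lemma tP_congr (f : F[X]) (k ℓ : ℕ) {c c' : ℕ → F} (h : ∀ j, j < k - 2 → c j = c' j) :
    tP f k ℓ c = tP f k ℓ c' := by
  unfold tP tailP
  congr 1
  refine Finset.sum_congr rfl fun i hi => ?_
  rw [Finset.mem_Ico] at hi
  rw [h _ (by omega)]

noncomputable def linP (p : F[X]) (a b : F) : F[X] := p + C a * X + C b

lemma coeff_linP_ge2 (p : F[X]) (a b : F) {j : ℕ} (hj : 2 ≤ j) :
    (linP p a b).coeff j = p.coeff j := by
  rw [linP, coeff_add, coeff_add, coeff_C_mul, coeff_X, coeff_C,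
    if_neg (by omega), if_neg (by omega)]
  ring

lemma coeff_linP_one (p : F[X]) (a b : F) :
    (linP p a b).coeff 1 = p.coeff 1 + a := by
  rw [linP, coeff_add, coeff_add, coeff_C_mul, coeff_X, coeff_C,
    if_pos rfl, if_neg (by omega)]
  ring

lemma coeff_linP_zero (p : F[X]) (a b : F) :
    (linP p a b).coeff 0 = p.coeff 0 + b := by
  rw [linP, coeff_add, coeff_add, coeff_C_mul, coeff_X, coeff_C,
    if_neg (by omega), if_pos rfl]
  ring

noncomputable def cOne (f : F[X]) (k ℓ : ℕ) (c : ℕ → F) (α β : F) : F :=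
  ((tP f k ℓ c).eval α - (tP f k ℓ c).eval β) / (β - α)

noncomputable def cZero (f : F[X]) (k ℓ : ℕ) (c : ℕ → F) (α β : F) : F :=
  -(tP f k ℓ c).eval α - cOne f k ℓ c α β * α

noncomputable def mkG (f : F[X]) (k ℓ : ℕ) (c : ℕ → F) (α β : F) : F[X] :=
  linP (tP f k ℓ c) (cOne f k ℓ c α β) (cZero f k ℓ c α β)

lemma cOne_congr (f : F[X]) (k ℓ : ℕ) {c c' : ℕ → F} (α β : F)
    (h : ∀ j, j < k - 2 → c j = c' j) :
    cOne f k ℓ c α β = cOne f k ℓ c' α β := by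
  unfold cOne; rw [tP_congr f k ℓ h]

lemma cZero_congr (f : F[X]) (k ℓ : ℕ) {c c' : ℕ → F} (α β : F)
    (h : ∀ j, j < k - 2 → c j = c' j) :
    cZero f k ℓ c α β = cZero f k ℓ c' α β := by
  unfold cZero; rw [tP_congr f k ℓ h, cOne_congr f k ℓ α β h]

lemma mkG_congr (f : F[X]) (k ℓ : ℕ) {c c' : ℕ → F} (α β : F)
    (h : ∀ j, j < k - 2 → c j = c' j) :
    mkG f k ℓ c α β = mkG f k ℓ c' α β := by
  unfold mkG
  rw [tP_congr f k ℓ h, cOne_congr f k ℓ α β h, cZero_congr f k ℓ α β h]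

lemma eval_mkG_left (f : F[X]) (k ℓ : ℕ) (c : ℕ → F) (α β : F) :
    (mkG f k ℓ c α β).eval α = 0 := by
  simp [mkG, linP, cZero]

lemma eval_mkG_right (f : F[X]) (k ℓ : ℕ) (c : ℕ → F) {α β : F} (h : α ≠ β) :
    (mkG f k ℓ c α β).eval β = 0 := by
  have hβα : β - α ≠ 0 := sub_ne_zero.mpr (Ne.symm h)
  simp only [mkG, linP, cZero, cOne, eval_add, eval_mul, eval_C, eval_X]
  field_simp
  ring

lemma coeff_mkG_high (f : F[X]) (k ℓ : ℕ) (c : ℕ → F) (α β : F) {j : ℕ}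
    (h1 : k ≤ j) (h2 : j ≤ k + ℓ) (hk : 2 ≤ k) :
    (mkG f k ℓ c α β).coeff j = f.coeff j := by
  rw [mkG, coeff_linP_ge2 _ _ _ (by omega), coeff_tP,
    if_pos ⟨h1, h2⟩, if_neg (by omega), add_zero]

lemma coeff_mkG_gt (f : F[X]) (k ℓ : ℕ) (c : ℕ → F) (α β : F) {j : ℕ}
    (h1 : k + ℓ < j) (hk : 2 ≤ k) :
    (mkG f k ℓ c α β).coeff j = 0 := by
  rw [mkG, coeff_linP_ge2 _ _ _ (by omega), coeff_tP,
    if_neg (by omega), if_neg (by omega)]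

lemma coeff_mkG_mid (f : F[X]) (k ℓ : ℕ) (c : ℕ → F) (α β : F) {j : ℕ}
    (h1 : 2 ≤ j) (h2 : j < k) :
    (mkG f k ℓ c α β).coeff j = c (j - 2) := by
  rw [mkG, coeff_linP_ge2 _ _ _ h1, coeff_tP,
    if_neg (by omega), if_pos ⟨h1, h2⟩]

lemma natDegree_mkG (f : F[X]) (k ℓ : ℕ) (c : ℕ → F) (α β : F) (hk : 2 ≤ k)
    (hf : f.Monic) (hdeg : f.natDegree = k + ℓ) :
    (mkG f k ℓ c α β).natDegree = k + ℓ := by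
  have hlead : (mkG f k ℓ c α β).coeff (k + ℓ) = 1 := by
    rw [coeff_mkG_high f k ℓ c α β le_self_add le_rfl hk, ← hdeg]
    exact hf.coeff_natDegree
  refine le_antisymm ?_ (le_natDegree_of_ne_zero (by rw [hlead]; exact one_ne_zero))
  rw [natDegree_le_iff_coeff_eq_zero]
  intro m hm
  exact coeff_mkG_gt f k ℓ c α β hm hk

lemma monic_mkG (f : F[X]) (k ℓ : ℕ) (c : ℕ → F) (α β : F) (hk : 2 ≤ k)
    (hf : f.Monic) (hdeg : f.natDegree = k + ℓ) :
    (mkG f k ℓ c α β).Monic := by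
  have h := natDegree_mkG f k ℓ c α β hk hf hdeg
  unfold Monic leadingCoeff
  rw [h, coeff_mkG_high f k ℓ c α β le_self_add le_rfl hk, ← hdeg]
  exact hf.coeff_natDegree

lemma reconstruct (f : F[X]) (k ℓ : ℕ) (hk : 2 ≤ k) (hf : f.Monic)
    (hdeg : f.natDegree = k + ℓ) (g : F[X]) (hg : g.Monic) (hgd : g.natDegree = k + ℓ)
    (hcoeff : ∀ i, 1 ≤ i → i ≤ ℓ → g.coeff (k + ℓ - i) = f.coeff (k + ℓ - i))
    {α β : F} (hne : α ≠ β) (hα : g.eval α = 0) (hβ : g.eval β = 0) :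
    g = mkG f k ℓ (fun j => g.coeff (j + 2)) α β := by
  set c : ℕ → F := fun j => g.coeff (j + 2) with hc
  set t : F[X] := tP f k ℓ c with ht
  -- Step 1: g = linP t (g.coeff 1) (g.coeff 0)
  have hstep : g = linP t (g.coeff 1) (g.coeff 0) := by
    ext j
    rcases Nat.lt_or_ge j 2 with hj | hj
    · have ht0 : ∀ m, m < 2 → t.coeff m = 0 := by
        intro m hm
        rw [ht, coeff_tP, if_neg (by omega), if_neg (by omega)]
      interval_cases j
      · rw [coeff_linP_zero, ht0 0 (by omega), zero_add]
      · rw [coeff_linP_one, ht0 1 (by omega), zero_add]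
    · rw [coeff_linP_ge2 _ _ _ hj, ht, coeff_tP]
      rcases Nat.lt_or_ge j k with hjk | hjk
      · rw [if_neg (by omega), if_pos ⟨hj, hjk⟩, hc]
        simp only []
        congr 1
        omega
      · rcases Nat.lt_or_ge (k + ℓ) j with hjl | hjl
        · rw [if_neg (by omega), if_neg (by omega)]
          exact coeff_eq_zero_of_natDegree_lt (by omega)
        · rw [if_pos ⟨hjk, hjl⟩, if_neg (by omega), add_zero]
          rcases Nat.eq_or_lt_of_le hjl with heq | hlt
          · have h1 : g.coeff (k + ℓ) = 1 := by rw [← hgd]; exact hg.coeff_natDegree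
            have h2 : f.coeff (k + ℓ) = 1 := by rw [← hdeg]; exact hf.coeff_natDegree
            rw [heq, h1, h2]
          · have := hcoeff (k + ℓ - j) (by omega) (by omega)
            have hj' : k + ℓ - (k + ℓ - j) = j := by omega
            rwa [hj'] at this
  -- Step 2: identify the linear coefficients
  have hβα : β - α ≠ 0 := sub_ne_zero.mpr (Ne.symm hne)
  have hevα : t.eval α + g.coeff 1 * α + g.coeff 0 = 0 := by
    have := hα
    rw [hstep] at this
    simpa [linP] using this
  have hevβ : t.eval β + g.coeff 1 * β + g.coeff 0 = 0 := by
    have := hβ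
    rw [hstep] at this
    simpa [linP] using this
  have h1 : g.coeff 1 = cOne f k ℓ c α β := by
    rw [cOne, ← ht, eq_div_iff hβα]
    linear_combination hevβ - hevα
  have h0 : g.coeff 0 = cZero f k ℓ c α β := by
    rw [cZero, ← ht, ← h1]
    linear_combination hevα
  rw [mkG, ← ht, ← h1, ← h0]
  exact hstep

end Stmt18Aux

/-- For a fixed monic `f` of degree `k+ℓ` (with `k ≥ 2`) over `F_q` and `D ⊆ F_q` with
`|D| = n`, the total number of ordered pairs of distinct roots in `D`, summed over the
`q^k` monic polynomials `g` of degree `k+ℓ` with the same `ℓ` leading coefficients as `f`,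
is `(n² - n)·q^{k-2}` (equivalently, the variance of the number of distinct roots in `D`
of a uniformly random such `g` is `n(q-1)/q²`).  The sum is expressed as a count of
triples `(g, α, β)` with `α ≠ β` both roots of `g` in `D`. -/
theorem stmt18 {F : Type*} [Field F] [Fintype F] (ℓ k : ℕ) (hℓ : 1 ≤ ℓ) (hk : 2 ≤ k)
    (D : Finset F) (n : ℕ) (hn : D.card = n) (f : F[X]) (hf : f.Monic)
    (hdeg : f.natDegree = k + ℓ) :
    Nat.card {x : F[X] × F × F // x.1.Monic ∧ x.1.natDegree = k + ℓ ∧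
        (∀ i, 1 ≤ i → i ≤ ℓ → x.1.coeff (k + ℓ - i) = f.coeff (k + ℓ - i)) ∧
        x.2.1 ∈ D ∧ x.2.2 ∈ D ∧ x.2.1 ≠ x.2.2 ∧
        x.1.eval x.2.1 = 0 ∧ x.1.eval x.2.2 = 0} =
      (n ^ 2 - n) * Fintype.card F ^ (k - 2) := by
  classical
  set ex : (Fin (k - 2) → F) → ℕ → F :=
    fun v j => if h : j < k - 2 then v ⟨j, h⟩ else 0 with hex
  have e : {x : F[X] × F × F // x.1.Monic ∧ x.1.natDegree = k + ℓ ∧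
        (∀ i, 1 ≤ i → i ≤ ℓ → x.1.coeff (k + ℓ - i) = f.coeff (k + ℓ - i)) ∧
        x.2.1 ∈ D ∧ x.2.2 ∈ D ∧ x.2.1 ≠ x.2.2 ∧
        x.1.eval x.2.1 = 0 ∧ x.1.eval x.2.2 = 0} ≃
      (↥(D.offDiag) × (Fin (k - 2) → F)) :=
    { toFun := fun x =>
        (⟨(x.1.2.1, x.1.2.2),
          Finset.mem_offDiag.mpr ⟨x.2.2.2.2.1, x.2.2.2.2.2.1, x.2.2.2.2.2.2.1⟩⟩,
          fun i => x.1.1.coeff ((i : ℕ) + 2))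
      invFun := fun p => by
        refine ⟨(mkG f k ℓ (ex p.2) p.1.1.1 p.1.1.2, p.1.1.1, p.1.1.2), ?_⟩
        obtain ⟨h1, h2, h3⟩ := Finset.mem_offDiag.mp p.1.2
        exact ⟨monic_mkG f k ℓ _ _ _ hk hf hdeg, natDegree_mkG f k ℓ _ _ _ hk hf hdeg,
          fun i hi1 hi2 => coeff_mkG_high f k ℓ _ _ _ (by omega) (by omega) hk,
          h1, h2, h3, eval_mkG_left f k ℓ _ _ _, eval_mkG_right f k ℓ _ h3⟩
      left_inv := by
        rintro ⟨⟨g, α, β⟩, hg, hgd, hcoeff, hα, hβ, hne, he1, he2⟩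
        apply Subtype.ext
        simp only []
        refine Prod.ext ?_ rfl
        have hcg : ∀ j, j < k - 2 →
            ex (fun i : Fin (k - 2) => g.coeff ((i : ℕ) + 2)) j = g.coeff (j + 2) := by
          intro j hj
          simp only [hex, dif_pos hj]
        rw [mkG_congr f k ℓ α β hcg]
        exact (reconstruct f k ℓ hk hf hdeg g hg hgd hcoeff hne he1 he2).symm
      right_inv := by
        rintro ⟨⟨⟨α, β⟩, hmem⟩, v⟩
        refine Prod.ext rfl ?_
        funext i
        simp only []
        rw [coeff_mkG_mid f k ℓ _ α β (by omega) (by omega : (i : ℕ) + 2 < k)]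
        simp [hex, Nat.add_sub_cancel, i.isLt] }
  rw [Nat.card_congr e, Nat.card_prod, Nat.card_eq_fintype_card, Nat.card_eq_fintype_card,
    Fintype.card_coe, Finset.offDiag_card, hn, Fintype.card_fun, Fintype.card_fin, pow_two]
end
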